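/- arXiv:0812.2159 — 7 statements merged into one kernel-verified Lean document; each statement's English description precedes it below -/
import Mathlib

section
/- Let (P₁,P₂,P₃,P₄) be nonzero null vectors in ℂ^{n,1}, pairwise linearly independent, with Gram matrix G = (⟨P_i,P_j⟩). Then among the matrices D*·G·D, where D ranges over invertible diagonal complex 4×4 matrices, there is exactly one matrix G' = (g'_{ij}) satisfying g'_{12} = g'_{23} = g'_{34} = 1 and |g'_{13}| = 1. -/
open Complex Matrix
open scoped ComplexConjugate

noncomputable section

/-- The Hermitian form of signature `(n,1)` on `ℂ^{n+1}`:
`⟨Z,W⟩ = Z₁·conj W_{n+1} + Z₂·conj W₂ + ⋯ + Z_n·conj W_n + Z_{n+1}·conj W₁`. -/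
def herm {n : ℕ} (Z W : Fin (n + 1) → ℂ) : ℂ :=
  Z 0 * conj (W (Fin.last n)) + Z (Fin.last n) * conj (W 0) +
    ∑ i ∈ Finset.univ.filter (fun i : Fin (n + 1) => i ≠ 0 ∧ i ≠ Fin.last n),
      Z i * conj (W i)

/-- The Gram matrix of a quadruple of vectors. -/
def gram {n : ℕ} (P : Fin 4 → Fin (n + 1) → ℂ) : Matrix (Fin 4) (Fin 4) ℂ :=
  fun i j => herm (P i) (P j)

/-- A quadruple of nonzero null vectors, pairwise linearly independent. -/
def IsNullQuadruple {n : ℕ} (P : Fin 4 → Fin (n + 1) → ℂ) : Prop :=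
  (∀ i, P i ≠ 0) ∧ (∀ i, herm (P i) (P i) = 0) ∧
    ∀ i j, i ≠ j → LinearIndependent ℂ ![P i, P j]

/-- The Korányi–Reimann complex cross-ratio. -/
def crossRatio {n : ℕ} (P₁ P₂ P₃ P₄ : Fin (n + 1) → ℂ) : ℂ :=
  (herm P₃ P₁ * herm P₄ P₂) / (herm P₄ P₁ * herm P₃ P₂)

/-- Cartan's angular invariant. -/
def cartan {n : ℕ} (P₁ P₂ P₃ : Fin (n + 1) → ℂ) : ℝ :=
  (-(herm P₁ P₂ * herm P₂ P₃ * herm P₃ P₁)).arg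

/-- `G` is the normalized Gram matrix of the quadruple `P`. -/
def IsNormalizedGram {n : ℕ} (P : Fin 4 → Fin (n + 1) → ℂ)
    (G : Matrix (Fin 4) (Fin 4) ℂ) : Prop :=
  (∃ d : Fin 4 → ℂ, (∀ i, d i ≠ 0) ∧
      G = (Matrix.diagonal d)ᴴ * gram P * Matrix.diagonal d) ∧
    G 0 1 = 1 ∧ G 1 2 = 1 ∧ G 2 3 = 1 ∧ ‖G 0 2‖ = 1

/-- Two quadruples are congruent if a linear map preserving the Hermitian form
sends one to the other up to nonzero scalars. -/
def HermCongruent {n : ℕ} (P P' : Fin 4 → Fin (n + 1) → ℂ) : Prop :=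
  ∃ A : (Fin (n + 1) → ℂ) →ₗ[ℂ] (Fin (n + 1) → ℂ),
    (∀ Z W, herm (A Z) (A W) = herm Z W) ∧
    ∃ lam : Fin 4 → ℂ, (∀ i, lam i ≠ 0) ∧ ∀ i, A (P i) = lam i • P' i

/-!
A form of signature `(n,1)` has no two-dimensional totally isotropic subspace, so two
independent null vectors are never orthogonal and every off-diagonal Gram entry is nonzero.
Diagonal congruence by `d` multiplies `g i j` by `conj (d i) * d j`. The conditions
`g' 0 1 = g' 1 2 = g' 2 3 = 1` determine `d 1, d 2, d 3` from `d 0`, and `‖g' 0 2‖ = 1` then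
fixes `‖d 0‖`; so two normalizations differ by a congruence with a unimodular scalar, which
acts trivially.
-/

section HermitianForm

variable {n : ℕ}

lemma herm_swap (Z W : Fin (n + 1) → ℂ) : herm W Z = conj (herm Z W) := by
  simp only [herm, map_add, map_sum, map_mul, conj_conj, mul_comm (conj (Z _))]
  ring

lemma herm_smul_left (a : ℂ) (Z W : Fin (n + 1) → ℂ) : herm (a • Z) W = a * herm Z W := by
  simp only [herm, Pi.smul_apply, smul_eq_mul, mul_add, Finset.mul_sum]
  ring_nf

lemma herm_sub_left (Z Z' W : Fin (n + 1) → ℂ) :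
    herm (Z - Z') W = herm Z W - herm Z' W := by
  simp only [herm, Pi.sub_apply, sub_mul, Finset.sum_sub_distrib]
  ring

lemma herm_smul_right (a : ℂ) (Z W : Fin (n + 1) → ℂ) :
    herm Z (a • W) = conj a * herm Z W := by
  rw [herm_swap, herm_smul_left, map_mul, ← herm_swap]

lemma herm_sub_right (Z W W' : Fin (n + 1) → ℂ) :
    herm Z (W - W') = herm Z W - herm Z W' := by
  rw [herm_swap, herm_sub_left, map_sub, ← herm_swap, ← herm_swap]

-- The form is positive definite on the coordinates strictly between the first and the last.
lemma apply_eq_zero_of_herm_self_eq_zero {Z : Fin (n + 1) → ℂ} (hZ : herm Z Z = 0)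
    (hZ0 : Z 0 = 0) {i : Fin (n + 1)} (hi : i ≠ Fin.last n) : Z i = 0 := by
  rcases eq_or_ne i 0 with rfl | hi0
  · exact hZ0
  have hsum : ∑ j ∈ Finset.univ.filter (fun j : Fin (n + 1) => j ≠ 0 ∧ j ≠ Fin.last n),
      normSq (Z j) = 0 := by
    simpa [herm, hZ0, mul_conj] using congrArg re hZ
  rw [Finset.sum_eq_zero_iff_of_nonneg fun j _ => normSq_nonneg (Z j)] at hsum
  exact normSq_eq_zero.mp (hsum i (by simp [hi0, hi]))

lemma eq_zero_of_herm_eq_zero_of_apply_zero_eq_zero {Z R : Fin (n + 1) → ℂ} (hR : herm R R = 0)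
    (hR0 : R 0 = 0) (hZR : herm Z R = 0) (hZ0 : Z 0 ≠ 0) : R = 0 := by
  have hmid : ∀ i ≠ Fin.last n, R i = 0 := fun i => apply_eq_zero_of_herm_self_eq_zero hR hR0
  have hZR' : herm Z R = Z 0 * conj (R (Fin.last n)) := by
    rw [herm, hR0, Finset.sum_eq_zero fun i hi => by
      rw [hmid i (Finset.mem_filter.mp hi).2.2, map_zero, mul_zero]]
    simp
  have hlast : R (Fin.last n) = 0 := by
    simpa [hZ0] using hZR'.symm.trans hZR
  funext i
  rcases eq_or_ne i (Fin.last n) with rfl | hi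
  · exact hlast
  · exact hmid i hi

lemma not_linearIndependent_of_apply_zero_eq_zero {Z W : Fin (n + 1) → ℂ}
    (hZ : herm Z Z = 0) (hW : herm W W = 0) (hZ0 : Z 0 = 0) (hW0 : W 0 = 0) :
    ¬ LinearIndependent ℂ ![Z, W] := by
  intro hli
  have hrel : W (Fin.last n) • Z + (-Z (Fin.last n)) • W = 0 := by
    funext i
    rcases eq_or_ne i (Fin.last n) with rfl | hi
    · simp only [Pi.add_apply, Pi.smul_apply, smul_eq_mul, Pi.zero_apply]
      ring
    · simp [apply_eq_zero_of_herm_self_eq_zero hZ hZ0 hi,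
        apply_eq_zero_of_herm_self_eq_zero hW hW0 hi]
  have hZlast : Z (Fin.last n) = 0 :=
    neg_eq_zero.mp (LinearIndependent.pair_iff.mp hli _ _ hrel).2
  apply hli.ne_zero 0
  funext i
  rcases eq_or_ne i (Fin.last n) with rfl | hi
  · exact hZlast
  · exact apply_eq_zero_of_herm_self_eq_zero hZ hZ0 hi

lemma herm_ne_zero_of_linearIndependent {Z W : Fin (n + 1) → ℂ} (hZ : herm Z Z = 0)
    (hW : herm W W = 0) (hli : LinearIndependent ℂ ![Z, W]) : herm Z W ≠ 0 := by
  intro hZW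
  have hWZ : herm W Z = 0 := by rw [herm_swap, hZW, map_zero]
  wlog hZ0 : Z 0 ≠ 0 generalizing Z W
  · by_cases hW0 : W 0 = 0
    · exact not_linearIndependent_of_apply_zero_eq_zero hZ hW (not_not.mp hZ0) hW0 hli
    · exact this hW hZ (LinearIndependent.pair_symm_iff.mp hli) hWZ hZW hW0
  set R := W 0 • Z - Z 0 • W
  have hR : herm R R = 0 := by
    simp [R, herm_sub_left, herm_sub_right, herm_smul_left, herm_smul_right, hZ, hW, hZW, hWZ]
  have hZR : herm Z R = 0 := by
    simp [R, herm_sub_right, herm_smul_right, hZ, hZW]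
  have hR0 : R 0 = 0 := by
    simp only [R, Pi.sub_apply, Pi.smul_apply, smul_eq_mul]
    ring
  have hrel : W 0 • Z + (-Z 0) • W = 0 := by
    rw [neg_smul, ← sub_eq_add_neg]
    exact eq_zero_of_herm_eq_zero_of_apply_zero_eq_zero hR hR0 hZR hZ0
  exact hZ0 (neg_eq_zero.mp (LinearIndependent.pair_iff.mp hli _ _ hrel).2)

lemma IsNullQuadruple.gram_ne_zero {P : Fin 4 → Fin (n + 1) → ℂ} (hP : IsNullQuadruple P)
    {i j : Fin 4} (hij : i ≠ j) : gram P i j ≠ 0 :=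
  herm_ne_zero_of_linearIndependent (hP.2.1 i) (hP.2.1 j) (hP.2.2 i j hij)

end HermitianForm

section DiagonalCongruence

lemma conjTranspose_diagonal_mul_mul_diagonal_apply {ι R : Type*} [Fintype ι] [DecidableEq ι]
    [Semiring R] [StarRing R] (d : ι → R) (A : Matrix ι ι R) (i j : ι) :
    ((diagonal d)ᴴ * A * diagonal d) i j = star (d i) * A i j * d j := by
  rw [mul_diagonal, diagonal_conjTranspose, diagonal_mul, Pi.star_apply]

lemma conjTranspose_diagonal_mul_mul_diagonal_mul {ι R : Type*} [Fintype ι] [DecidableEq ι]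
    [CommSemiring R] [StarRing R] (d f : ι → R) (A : Matrix ι ι R) :
    (diagonal f)ᴴ * ((diagonal d)ᴴ * A * diagonal d) * diagonal f
      = (diagonal (d * f))ᴴ * A * diagonal (d * f) := by
  ext i j
  simp only [conjTranspose_diagonal_mul_mul_diagonal_apply, Pi.mul_apply, star_mul']
  ring

def NormalizedEntries (M : Matrix (Fin 4) (Fin 4) ℂ) : Prop :=
  M 0 1 = 1 ∧ M 1 2 = 1 ∧ M 2 3 = 1 ∧ ‖M 0 2‖ = 1

lemma eq_of_norm_eq_one_of_conj_mul_eq_one {z w : ℂ} (hz : ‖z‖ = 1) (h : conj z * w = 1) :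
    w = z := by
  have hzz : conj z * z = 1 := by
    rw [mul_comm, mul_conj, normSq_eq_norm_sq, hz]
    norm_num
  exact mul_left_cancel₀ (left_ne_zero_of_mul_eq_one hzz) (h.trans hzz.symm)

lemma eq_of_normalizedEntries_conjTranspose_diagonal_mul_mul_diagonal
    {A : Matrix (Fin 4) (Fin 4) ℂ} {f : Fin 4 → ℂ} (hA : NormalizedEntries A)
    (hfA : NormalizedEntries ((diagonal f)ᴴ * A * diagonal f)) :
    (diagonal f)ᴴ * A * diagonal f = A := by
  obtain ⟨hA01, hA12, hA23, hA02⟩ := hA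
  obtain ⟨h01, h12, h23, h02⟩ := hfA
  simp only [conjTranspose_diagonal_mul_mul_diagonal_apply, hA01, hA12, hA23, mul_one,
    star_def] at h01 h12 h23
  rw [conjTranspose_diagonal_mul_mul_diagonal_apply, norm_mul, norm_mul, hA02, mul_one,
    star_def, norm_conj] at h02
  have n01 : ‖f 0‖ * ‖f 1‖ = 1 := by simpa using congrArg norm h01
  have n12 : ‖f 1‖ * ‖f 2‖ = 1 := by simpa using congrArg norm h12
  have hf0 : ‖f 0‖ = 1 := by
    nlinarith [norm_nonneg (f 0), norm_nonneg (f 1), norm_nonneg (f 2)]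
  have hf1 : f 1 = f 0 := eq_of_norm_eq_one_of_conj_mul_eq_one hf0 h01
  have hf2 : f 2 = f 0 := hf1 ▸ eq_of_norm_eq_one_of_conj_mul_eq_one (hf1 ▸ hf0) h12
  have hf3 : f 3 = f 0 := hf2 ▸ eq_of_norm_eq_one_of_conj_mul_eq_one (hf2 ▸ hf0) h23
  have hf : ∀ i, f i = f 0 := by
    intro i
    fin_cases i
    exacts [rfl, hf1, hf2, hf3]
  have hff : conj (f 0) * f 0 = 1 := hf1 ▸ h01
  ext i j
  rw [conjTranspose_diagonal_mul_mul_diagonal_apply, hf i, hf j, star_def]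
  linear_combination A i j * hff

-- With `d 0 = s` real, `d 1`, `d 2`, `d 3` solve the three equations in turn, and the last
-- entry then has norm `s ^ 2 * ‖A 0 1‖ * ‖A 0 2‖ / ‖A 1 2‖`.
lemma exists_normalizedEntries_conjTranspose_diagonal_mul_mul_diagonal
    {A : Matrix (Fin 4) (Fin 4) ℂ} (h01 : A 0 1 ≠ 0) (h12 : A 1 2 ≠ 0) (h23 : A 2 3 ≠ 0)
    (h02 : A 0 2 ≠ 0) :
    ∃ d : Fin 4 → ℂ, (∀ i, d i ≠ 0) ∧
      NormalizedEntries ((diagonal d)ᴴ * A * diagonal d) := by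
  set s : ℝ := √(‖A 1 2‖ / (‖A 0 1‖ * ‖A 0 2‖))
  have hs : 0 < s := Real.sqrt_pos.mpr (by positivity)
  have hs2 : s ^ 2 * (‖A 0 1‖ * ‖A 0 2‖) = ‖A 1 2‖ := by
    rw [Real.sq_sqrt (by positivity)]
    field_simp
  have hs' : (s : ℂ) ≠ 0 := ofReal_ne_zero.mpr hs.ne'
  refine ⟨![s, (s * A 0 1)⁻¹, s * conj (A 0 1) / A 1 2, conj (A 1 2) / (s * A 0 1 * A 2 3)],
    ?_, ?_, ?_, ?_, ?_⟩
  · intro i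
    fin_cases i <;> simp [hs', h01, h12, h23]
  all_goals simp only [conjTranspose_diagonal_mul_mul_diagonal_apply, cons_val_zero, cons_val_one,
    cons_val, star_def, star_mul', star_inv₀, star_div₀, conj_ofReal, conj_conj, norm_mul,
    norm_div, norm_real, norm_conj, Real.norm_eq_abs]
  · field_simp
  · field_simp [(map_ne_zero _).mpr h01]
  · field_simp [(map_ne_zero _).mpr h12]
  · rw [abs_of_pos hs]
    field_simp
    linear_combination hs2

lemma conjTranspose_diagonal_mul_mul_diagonal_eq_of_normalizedEntries
    {A : Matrix (Fin 4) (Fin 4) ℂ} {d e : Fin 4 → ℂ} (hd : ∀ i, d i ≠ 0)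
    (hdA : NormalizedEntries ((diagonal d)ᴴ * A * diagonal d))
    (heA : NormalizedEntries ((diagonal e)ᴴ * A * diagonal e)) :
    (diagonal e)ᴴ * A * diagonal e = (diagonal d)ᴴ * A * diagonal d := by
  have he : e = d * (e / d) := funext fun i => (mul_div_cancel₀ (e i) (hd i)).symm
  rw [he, ← conjTranspose_diagonal_mul_mul_diagonal_mul] at heA ⊢
  exact eq_of_normalizedEntries_conjTranspose_diagonal_mul_mul_diagonal hdA heA

end DiagonalCongruence

/-- existence and uniqueness of the normalized Gram matrix. -/
theorem stmt0 (n : ℕ) (P : Fin 4 → Fin (n + 1) → ℂ) (hP : IsNullQuadruple P) :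
    ∃! G' : Matrix (Fin 4) (Fin 4) ℂ,
      (∃ d : Fin 4 → ℂ, (∀ i, d i ≠ 0) ∧
          G' = (Matrix.diagonal d)ᴴ * gram P * Matrix.diagonal d) ∧
      G' 0 1 = 1 ∧ G' 1 2 = 1 ∧ G' 2 3 = 1 ∧ ‖G' 0 2‖ = 1 := by
  obtain ⟨d, hd, hdG⟩ := exists_normalizedEntries_conjTranspose_diagonal_mul_mul_diagonal
    (hP.gram_ne_zero (i := 0) (j := 1) (by decide)) (hP.gram_ne_zero (i := 1) (j := 2) (by decide))
    (hP.gram_ne_zero (i := 2) (j := 3) (by decide)) (hP.gram_ne_zero (i := 0) (j := 2) (by decide))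
  refine ⟨_, ⟨⟨d, hd, rfl⟩, hdG⟩, ?_⟩
  rintro _ ⟨⟨e, -, rfl⟩, heG⟩
  exact conjTranspose_diagonal_mul_mul_diagonal_eq_of_normalizedEntries hd hdG heG
end
end

section
/- Let (P₁,P₂,P₃,P₄) be nonzero null vectors in ℂ^{2,1}, pairwise linearly independent (representing an ordered quadruple of distinct points of ∂ℂH²). Then −2·Re(X₁+X₂) − 2·Re(X₁·conj(X₂)·e^{−2i𝔸}) + |X₁|² + |X₂|² + 1 = 0, where X₁ = X(p₁,p₂,p₃,p₄), X₂ = X(p₁,p₃,p₂,p₄), and 𝔸 = 𝔸(p₁,p₂,p₃). -/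
open Complex Matrix
open scoped ComplexConjugate

noncomputable section

/-- Two quadruples are congruent if a linear map preserving the Hermitian form
sends one to the other up to nonzero scalars. -/
def CongruentQuad {n : ℕ} (P P' : Fin 4 → Fin (n + 1) → ℂ) : Prop :=
  ∃ A : (Fin (n + 1) → ℂ) →ₗ[ℂ] (Fin (n + 1) → ℂ),
    (∀ Z W, herm (A Z) (A W) = herm Z W) ∧
    ∃ lam : Fin 4 → ℂ, (∀ i, lam i ≠ 0) ∧ ∀ i, A (P i) = lam i • P' i

/-!
Four vectors in `ℂ³` are linearly dependent, so their Gram matrix for `⟨·,·⟩` is singular. For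
null vectors its diagonal vanishes, and its off-diagonal entries do not, since two orthogonal null
vectors are proportional (the form has Witt index one). Expanding the determinant and dividing by
`|⟨P₁,P₄⟩⟨P₂,P₃⟩|²` gives the relation, once `e^{-2i𝔸} = conj w / w` for
`w = -⟨P₁,P₂⟩⟨P₂,P₃⟩⟨P₃,P₁⟩` is inserted.
-/

lemma herm_fin_three (Z W : Fin 3 → ℂ) :
    herm Z W = Z 0 * conj (W 2) + Z 2 * conj (W 0) + Z 1 * conj (W 1) := by
  have h : Finset.univ.filter (fun i : Fin 3 => i ≠ 0 ∧ i ≠ Fin.last 2) = {1} := by decide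
  rw [herm, h, Finset.sum_singleton]
  rfl

lemma conj_herm {n : ℕ} (Z W : Fin (n + 1) → ℂ) : conj (herm Z W) = herm W Z := by
  simp only [herm, map_add, map_sum, map_mul, conj_conj]
  rw [add_comm (W 0 * _)]
  congr 1
  · ring
  · exact Finset.sum_congr rfl fun _ _ => mul_comm _ _

lemma herm_sum_smul_left {n : ℕ} {ι : Type*} [Fintype ι] (g : ι → ℂ)
    (P : ι → Fin (n + 1) → ℂ) (W : Fin (n + 1) → ℂ) :
    herm (∑ i, g i • P i) W = ∑ i, g i * herm (P i) W := by
  simp only [herm, Finset.sum_apply, Pi.smul_apply, smul_eq_mul, Finset.sum_mul,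
    Finset.mul_sum, mul_add, Finset.sum_add_distrib, mul_assoc]
  rw [Finset.sum_comm]

lemma det_gram_eq_zero {n : ℕ} (hn : n ≤ 2) (P : Fin 4 → Fin (n + 1) → ℂ) :
    (gram P).det = 0 := by
  have hdep : ¬ LinearIndependent ℂ P := fun h => by
    have := h.fintype_card_le_finrank
    simp only [Fintype.card_fin, Module.finrank_fintype_fun_eq_card] at this
    omega
  obtain ⟨g, hg, i, hgi⟩ := Fintype.not_linearIndependent_iff.mp hdep
  refine Matrix.exists_vecMul_eq_zero_iff.mp ⟨g, fun h => hgi (by simp [h]), funext fun j => ?_⟩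
  show ∑ i, g i * herm (P i) (P j) = 0
  rw [← herm_sum_smul_left, hg]
  simp [herm]

lemma coord_one_eq_zero_of_herm_self_eq_zero {V : Fin 3 → ℂ} (hV : herm V V = 0) (h0 : V 0 = 0) :
    V 1 = 0 := by
  simpa [herm_fin_three, h0, Complex.mul_conj] using hV

lemma exists_eq_smul_of_herm_eq_zero {Z W : Fin 3 → ℂ} (hZ : Z ≠ 0) (hZZ : herm Z Z = 0)
    (hWW : herm W W = 0) (hZW : herm Z W = 0) : ∃ c : ℂ, W = c • Z := by
  have hWZ : herm W Z = 0 := by rw [← conj_herm, hZW, map_zero]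
  by_cases hZ0 : Z 0 = 0
  · have hZ1 := coord_one_eq_zero_of_herm_self_eq_zero hZZ hZ0
    have hZ2 : Z 2 ≠ 0 := fun hZ2 => hZ (funext fun k => by fin_cases k <;> assumption)
    have hW0 : W 0 = 0 := by simpa [herm_fin_three, hZ0, hZ1, hZ2] using hZW
    have hW1 := coord_one_eq_zero_of_herm_self_eq_zero hWW hW0
    refine ⟨W 2 / Z 2, funext fun k => ?_⟩
    fin_cases k <;> simp [hZ0, hZ1, hW0, hW1, hZ2]
  · -- `V` is null, lying in the totally isotropic span of `Z` and `W`, and has `V 0 = 0`.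
    set V := W 0 • Z - Z 0 • W with hV
    have hVV : herm V V = 0 := by
      simp only [herm_fin_three, hV, Pi.sub_apply, Pi.smul_apply, smul_eq_mul, map_sub,
        map_mul] at hZZ hWW hZW hWZ ⊢
      linear_combination W 0 * conj (W 0) * hZZ - W 0 * conj (Z 0) * hZW
        - Z 0 * conj (W 0) * hWZ + Z 0 * conj (Z 0) * hWW
    have hV0 : V 0 = 0 := by simp only [hV, Pi.sub_apply, Pi.smul_apply, smul_eq_mul]; ring
    have hV1 := coord_one_eq_zero_of_herm_self_eq_zero hVV hV0
    have hV2 : V 2 = 0 := by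
      have hVZ : herm V Z = V 2 * conj (Z 0) := by rw [herm_fin_three, hV0, hV1]; ring
      have : herm V Z = 0 := by
        simp only [herm_fin_three, hV, Pi.sub_apply, Pi.smul_apply, smul_eq_mul] at hZZ hWZ ⊢
        linear_combination W 0 * hZZ - Z 0 * hWZ
      simpa [hZ0, this] using hVZ.symm
    have hV' : W 0 • Z = Z 0 • W := sub_eq_zero.mp (funext fun k => by fin_cases k <;> assumption)
    exact ⟨W 0 / Z 0, by rw [div_eq_inv_mul, mul_smul, hV', inv_smul_smul₀ hZ0]⟩

lemma IsNullQuadruple.herm_ne_zero {P : Fin 4 → Fin 3 → ℂ} (hP : IsNullQuadruple P) {i j : Fin 4}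
    (hij : i ≠ j) : herm (P i) (P j) ≠ 0 := fun h => by
  obtain ⟨hne, hnull, hli⟩ := hP
  obtain ⟨c, hc⟩ := exists_eq_smul_of_herm_eq_zero (hne i) (hnull i) (hnull j) h
  simpa using (linearIndependent_fin2.mp (hli j i hij.symm)).2 c hc.symm

lemma Matrix.det_fin_four_zero_diag {R : Type*} [CommRing R] (a b c d e f a' b' c' d' e' f' : R) :
    !![0, a, b, c; a', 0, d, e; b', d', 0, f; c', e', f', 0].det =
      a * a' * f * f' + b * b' * e * e' + c * c' * d * d'
        - (a * d * f * c' + a * e * f' * b' + b * d' * e * c' + b * f * e' * a'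
          + c * e' * d * b' + c * f' * d' * a') := by
  simp [Matrix.det_succ_row_zero, Fin.sum_univ_succ, Fin.succAbove]
  ring

lemma exp_neg_two_arg_mul_I {w : ℂ} (hw : w ≠ 0) : exp (-(2 * (w.arg : ℂ) * I)) = conj w / w := by
  rw [eq_div_iff hw]
  nth_rw 2 3 [← norm_mul_exp_arg_mul_I w]
  rw [map_mul, conj_ofReal, ← exp_conj, mul_left_comm, ← exp_add]
  simp only [map_mul, conj_ofReal, conj_I]
  ring_nf

lemma cross_ratio_relation_of_det_eq_zero {a b c d e f : ℂ} (ha : a ≠ 0) (hb : b ≠ 0)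
    (hc : c ≠ 0) (hd : d ≠ 0)
    (hdet : !![0, a, b, c; conj a, 0, d, e; conj b, conj d, 0, f; conj c, conj e, conj f, 0].det = 0)
    {X₁ X₂ : ℂ} (hX₁ : X₁ = conj b * conj e / (conj c * conj d))
    (hX₂ : X₂ = conj a * conj f / (conj c * d)) :
    -2 * (X₁ + X₂).re
      - 2 * (X₁ * conj X₂ * exp (-(2 * ((-(a * d * conj b)).arg : ℂ) * I))).re
      + ‖X₁‖ ^ 2 + ‖X₂‖ ^ 2 + 1 = 0 := by
  have hw : -(a * d * conj b) ≠ 0 := by simp [ha, hb, hd]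
  rw [Matrix.det_fin_four_zero_diag] at hdet
  rw [exp_neg_two_arg_mul_I hw, ← ofReal_eq_zero]
  push_cast
  rw [re_eq_add_conj, re_eq_add_conj, ← mul_conj', ← mul_conj']
  subst hX₁ hX₂
  simp only [map_div₀, map_mul, map_neg, conj_conj, map_add]
  obtain ⟨ha', hb', hc', hd'⟩ : conj a ≠ 0 ∧ conj b ≠ 0 ∧ conj c ≠ 0 ∧ conj d ≠ 0 := by
    simp [ha, hb, hc, hd]
  field_simp
  linear_combination hdet

lemma IsNullQuadruple.gram_eq {n : ℕ} {P : Fin 4 → Fin (n + 1) → ℂ} (hP : IsNullQuadruple P) :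
    gram P = !![0, herm (P 0) (P 1), herm (P 0) (P 2), herm (P 0) (P 3);
      conj (herm (P 0) (P 1)), 0, herm (P 1) (P 2), herm (P 1) (P 3);
      conj (herm (P 0) (P 2)), conj (herm (P 1) (P 2)), 0, herm (P 2) (P 3);
      conj (herm (P 0) (P 3)), conj (herm (P 1) (P 3)), conj (herm (P 2) (P 3)), 0] := by
  ext i j
  fin_cases i <;> fin_cases j <;> simp [_root_.gram, conj_herm, hP.2.1]

/-- the basic relation between `X₁`, `X₂` and `𝔸` for quadruples
in `∂ℂH²`. -/
theorem stmt9 (P : Fin 4 → Fin 3 → ℂ) (hP : IsNullQuadruple (n := 2) P)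
    (X₁ X₂ : ℂ) (A : ℝ)
    (hX₁ : X₁ = crossRatio (P 0) (P 1) (P 2) (P 3))
    (hX₂ : X₂ = crossRatio (P 0) (P 2) (P 1) (P 3))
    (hA : A = cartan (P 0) (P 1) (P 2)) :
    -2 * (X₁ + X₂).re
      - 2 * (X₁ * conj X₂ * Complex.exp (-(2 * (A : ℂ) * Complex.I))).re
      + ‖X₁‖ ^ 2 + ‖X₂‖ ^ 2 + 1 = 0 := by
  have hdet := det_gram_eq_zero le_rfl P
  rw [hP.gram_eq] at hdet
  rw [hA, cartan, ← conj_herm (P 0) (P 2)]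
  refine cross_ratio_relation_of_det_eq_zero (hP.herm_ne_zero (by decide))
    (hP.herm_ne_zero (by decide)) (hP.herm_ne_zero (by decide)) (hP.herm_ne_zero (by decide))
    hdet ?_ ?_
  · rw [hX₁, crossRatio, ← conj_herm (P 0) (P 2), ← conj_herm (P 1) (P 3), ← conj_herm (P 0) (P 3),
      ← conj_herm (P 1) (P 2)]
  · rw [hX₂, crossRatio, ← conj_herm (P 0) (P 1), ← conj_herm (P 2) (P 3), ← conj_herm (P 0) (P 3)]
end
end

section
/- Let F(a,b,c,d,A) = −2(a+c) − 2[(ac+bd)·cos 2A + (bc−ad)·sin 2A] + a² + b² + c² + d² + 1 as a function on ℝ⁵. If F(a,b,c,d,A) = 0 at a point with (a,b) ≠ (0,0), (c,d) ≠ (0,0), and −π/2 < A < π/2, then the gradient of F at that point is nonzero, i.e. at least one of the five partial derivatives ∂F/∂a = −1 − c·cos 2A + d·sin 2A + a, ∂F/∂c = −1 − a·cos 2A − b·sin 2A + c, ∂F/∂b = −d·cos 2A − c·sin 2A + b, ∂F/∂d = −b·cos 2A + a·sin 2A + d, ∂F/∂A = 2[(ac+bd)·sin 2A − (bc−ad)·cos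 2A] does not vanish there. -/
open Complex Matrix
open scoped ComplexConjugate

noncomputable section

/-- The defining function of the basic variety `𝕊`. -/
def Fb (a b c d A : ℝ) : ℝ :=
  -2 * (a + c)
    - 2 * ((a * c + b * d) * Real.cos (2 * A) + (b * c - a * d) * Real.sin (2 * A))
    + a ^ 2 + b ^ 2 + c ^ 2 + d ^ 2 + 1

/- With `C = cos 2A` and `S = sin 2A`, the combination `-∂F/∂a - C·∂F/∂c + S·∂F/∂d`
equals `(1 + C) + a·(S² + C² - 1)`, so a common zero forces `cos 2A = -1`, i.e. `cos A = 0`. -/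

theorem eq_neg_one_of_partials_eq_zero {a b c d C S : ℝ} (hCS : S ^ 2 + C ^ 2 = 1)
    (ha : -1 - c * C + d * S + a = 0) (hc : -1 - a * C - b * S + c = 0)
    (hd : -b * C + a * S + d = 0) : C = -1 := by
  linear_combination -ha - C * hc + S * hd - a * hCS

theorem neg_one_lt_cos_two_mul {A : ℝ} (hA₁ : -(Real.pi / 2) < A) (hA₂ : A < Real.pi / 2) :
    -1 < Real.cos (2 * A) := by
  have hcos : 0 < Real.cos A := Real.cos_pos_of_mem_Ioo ⟨hA₁, hA₂⟩
  rw [Real.cos_two_mul]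
  nlinarith

theorem stmt11_general (a b c d A : ℝ)
    (hA₁ : -(Real.pi / 2) < A) (hA₂ : A < Real.pi / 2) :
    ¬ ((-1 - c * Real.cos (2 * A) + d * Real.sin (2 * A) + a = 0) ∧
       (-1 - a * Real.cos (2 * A) - b * Real.sin (2 * A) + c = 0) ∧
       (-d * Real.cos (2 * A) - c * Real.sin (2 * A) + b = 0) ∧
       (-b * Real.cos (2 * A) + a * Real.sin (2 * A) + d = 0) ∧
       (2 * ((a * c + b * d) * Real.sin (2 * A) - (b * c - a * d) * Real.cos (2 * A)) = 0)) := by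
  rintro ⟨ha, hc, -, hd, -⟩
  exact (neg_one_lt_cos_two_mul hA₁ hA₂).ne'
    (eq_neg_one_of_partials_eq_zero (Real.sin_sq_add_cos_sq _) ha hc hd)

/-- the basic variety has no singular points with
`X₁ ≠ 0`, `X₂ ≠ 0` and `-π/2 < A < π/2`. -/
theorem stmt11 (a b c d A : ℝ) (h : Fb a b c d A = 0)
    (h1 : (a, b) ≠ (0, 0)) (h2 : (c, d) ≠ (0, 0))
    (hA₁ : -(Real.pi / 2) < A) (hA₂ : A < Real.pi / 2) :
    ¬ ((-1 - c * Real.cos (2 * A) + d * Real.sin (2 * A) + a = 0) ∧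
       (-1 - a * Real.cos (2 * A) - b * Real.sin (2 * A) + c = 0) ∧
       (-d * Real.cos (2 * A) - c * Real.sin (2 * A) + b = 0) ∧
       (-b * Real.cos (2 * A) + a * Real.sin (2 * A) + d = 0) ∧
       (2 * ((a * c + b * d) * Real.sin (2 * A) - (b * c - a * d) * Real.cos (2 * A)) = 0)) :=
  stmt11_general a b c d A hA₁ hA₂
end
end

section
/- Let F(a,b,c,d,A) = −2(a+c) − 2[(ac+bd)·cos 2A + (bc−ad)·sin 2A] + a² + b² + c² + d² + 1, and suppose A satisfies cos A ≠ 0 (i.e. A ≠ ±π/2 + 2kπ). Then a point (a,b,c,d,A) satisfies both F(a,b,c,d,A) = 0 and a·cos A + b·sin A = 0 (the Cartan variety condition Re(conj(X₁)·e^{iA}) = 0) if and only if a + b·tan A = 0, a + c = 1, and b − d = 0. -/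
open Complex Matrix
open scoped ComplexConjugate

noncomputable section

/-- Two quadruples are congruent if a linear map preserving the Hermitian form
sends one to the other up to nonzero scalars. -/
def Congruent' {n : ℕ} (P P' : Fin 4 → Fin (n + 1) → ℂ) : Prop :=
  ∃ A : (Fin (n + 1) → ℂ) →ₗ[ℂ] (Fin (n + 1) → ℂ),
    (∀ Z W, herm (A Z) (A W) = herm Z W) ∧
    ∃ lam : Fin 4 → ℂ, (∀ i, lam i ≠ 0) ∧ ∀ i, A (P i) = lam i • P' i

theorem Fb_eq_sq_add_sq_sub (a b c d A : ℝ) :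
    Fb a b c d A = (a + c - 1) ^ 2 + (b - d) ^ 2
      - 4 * (a * Real.cos A + b * Real.sin A) * (c * Real.cos A - d * Real.sin A) := by
  rw [Fb, Real.cos_two_mul, Real.sin_two_mul]
  linear_combination (-4 * b * d) * Real.sin_sq_add_cos_sq A

theorem Fb_eq_zero_iff_of_cartan {a b c d A : ℝ} (h : a * Real.cos A + b * Real.sin A = 0) :
    Fb a b c d A = 0 ↔ a + c = 1 ∧ b - d = 0 := by
  rw [Fb_eq_sq_add_sq_sub, h, mul_zero, zero_mul, sub_zero, sq, sq,
    mul_self_add_mul_self_eq_zero, sub_eq_zero]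

theorem add_mul_tan_eq_zero_iff {a b A : ℝ} (hcos : Real.cos A ≠ 0) :
    a + b * Real.tan A = 0 ↔ a * Real.cos A + b * Real.sin A = 0 := by
  have h : a * Real.cos A + b * Real.sin A = (a + b * Real.tan A) * Real.cos A := by
    rw [add_mul, mul_assoc, Real.tan_mul_cos hcos]
  rw [h, mul_eq_zero, or_iff_left hcos]

/-- intersection of the basic variety with the Cartan variety
`𝕊₁₂₄` away from `A = ±π/2 + 2kπ`. -/
theorem stmt13 (a b c d A : ℝ) (hcos : Real.cos A ≠ 0) :
    (Fb a b c d A = 0 ∧ a * Real.cos A + b * Real.sin A = 0) ↔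
      (a + b * Real.tan A = 0 ∧ a + c = 1 ∧ b - d = 0) := by
  rw [add_mul_tan_eq_zero_iff hcos, and_comm]
  exact and_congr_right Fb_eq_zero_iff_of_cartan
end
end

section
/- Let a, c, A be real numbers with −π/2 ≤ A ≤ π/2 satisfying −2(a+c) − 2ac·cos 2A + a² + c² + 1 = 0. Then a·cos A ≥ 0. (Equivalently: any point (X₁,X₂,A) of the basic variety with X₁, X₂ real and −π/2 ≤ A ≤ π/2 satisfies Re(X₁·e^{−iA}) ≥ 0.) -/
/- With `cos 2A = 2 cos² A - 1` the equation of the real slice reads `(a + c - 1)² = 4ac cos² A`,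
and `cos A ≥ 0` on `[-π/2, π/2]`. If `a < 0` and `cos A > 0`, this forces `c ≤ 0`, and then
`(a + c - 1)² - 4ac = (a - c)² - 2(a + c) + 1 > 0` contradicts `4ac cos² A ≤ 4ac`. -/

open Complex Matrix
open scoped ComplexConjugate

noncomputable section

/-- Two quadruples are congruent if a linear map preserving the Hermitian form
sends one to the other up to nonzero scalars. -/
def QuadCongruent {n : ℕ} (P P' : Fin 4 → Fin (n + 1) → ℂ) : Prop :=
  ∃ A : (Fin (n + 1) → ℂ) →ₗ[ℂ] (Fin (n + 1) → ℂ),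
    (∀ Z W, herm (A Z) (A W) = herm Z W) ∧
    ∃ lam : Fin 4 → ℂ, (∀ i, lam i ≠ 0) ∧ ∀ i, A (P i) = lam i • P' i

theorem mul_nonneg_of_sq_add_sub_one_eq {a c x : ℝ} (hx₀ : 0 ≤ x) (hx₁ : x ≤ 1)
    (h : (a + c - 1) ^ 2 = 4 * a * c * x ^ 2) : 0 ≤ a * x := by
  rcases hx₀.eq_or_lt with rfl | hx
  · simp
  refine mul_nonneg ?_ hx.le
  by_contra! ha
  have hacx : 0 ≤ a * c * x ^ 2 := by nlinarith [sq_nonneg (a + c - 1)]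
  have hac : 0 ≤ a * c := nonneg_of_mul_nonneg_left hacx (by positivity)
  have hc : c ≤ 0 := nonpos_of_mul_nonneg_right hac ha
  have hx2 : a * c * x ^ 2 ≤ a * c := mul_le_of_le_one_right hac (pow_le_one₀ hx₀ hx₁)
  nlinarith [sq_nonneg (a - c)]

/-- the real slice of the basic variety satisfies
`Re (X₁ e^{-iA}) ≥ 0`. -/
theorem stmt16 (a c A : ℝ) (hA₁ : -(Real.pi / 2) ≤ A) (hA₂ : A ≤ Real.pi / 2)
    (h : -2 * (a + c) - 2 * a * c * Real.cos (2 * A) + a ^ 2 + c ^ 2 + 1 = 0) :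
    0 ≤ a * Real.cos A := by
  refine mul_nonneg_of_sq_add_sub_one_eq (c := c) (Real.cos_nonneg_of_mem_Icc ⟨hA₁, hA₂⟩)
    (Real.cos_le_one A) ?_
  rw [Real.cos_two_mul] at h
  linear_combination h
end
end

section
/- Let a, b, c, d, A be real numbers with −π/2 < A < π/2 satisfying F(a,b,c,d,A) = −2(a+c) − 2[(ac+bd)·cos 2A + (bc−ad)·sin 2A] + a² + b² + c² + d² + 1 = 0. Then a·cos A + b·sin A ≥ 0. (Equivalently: any point (X₁,X₂,A) of the basic variety with −π/2 < A < π/2 satisfies Re(X₁·e^{−iA}) ≥ 0.) -/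
open Complex Matrix
open scoped ComplexConjugate

noncomputable section

/- With `Y₁ = X₁ e^{-iA} = u + iv` and `Y₂ = X₂ e^{iA} = p + iq` the defining function becomes
`F = |Y₁ - Y₂ + i sin A|² + cos² A - 2 cos A (u + p)`. On `𝕊` with `cos A > 0` this forces
`u + p > 0`, and rewriting `(u - p)² = (u + p)² - 4up` gives `4up = (u + p - cos A)² + (v - q + sin A)² ≥ 0`,
so `u = Re (X₁ e^{-iA})` and `p` are both nonnegative. -/

theorem Fb_eq_rotated (a b c d A : ℝ) :
    Fb a b c d A =
      ((a * Real.cos A + b * Real.sin A) - (c * Real.cos A - d * Real.sin A)) ^ 2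
        + ((b * Real.cos A - a * Real.sin A) - (c * Real.sin A + d * Real.cos A) + Real.sin A) ^ 2
        + Real.cos A ^ 2
        - 2 * Real.cos A * ((a * Real.cos A + b * Real.sin A) + (c * Real.cos A - d * Real.sin A)) := by
  rw [Fb, Real.cos_two_mul', Real.sin_two_mul]
  linear_combination -(1 - 2 * (a + c) + a ^ 2 + b ^ 2 + c ^ 2 + d ^ 2) * Real.sin_sq_add_cos_sq A

theorem nonneg_of_sq_add_sq_add_sq_eq {u p w k : ℝ} (hk : 0 < k)
    (h : (u - p) ^ 2 + w ^ 2 + k ^ 2 = 2 * k * (u + p)) : 0 ≤ u := by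
  have hsum : 0 < u + p :=
    pos_of_mul_pos_right (by nlinarith [sq_nonneg (u - p), sq_nonneg w]) (by positivity : 0 ≤ 2 * k)
  have hprod : 0 ≤ u * p := by nlinarith [sq_nonneg (u + p - k), sq_nonneg w]
  by_contra! hu
  nlinarith

/-- any point of the basic variety with `-π/2 < A < π/2`
satisfies `Re (X₁ e^{-iA}) ≥ 0`. -/
theorem stmt17 (a b c d A : ℝ) (hA₁ : -(Real.pi / 2) < A) (hA₂ : A < Real.pi / 2)
    (h : Fb a b c d A = 0) :
    0 ≤ a * Real.cos A + b * Real.sin A := by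
  have hcos : 0 < Real.cos A := Real.cos_pos_of_mem_Ioo ⟨hA₁, hA₂⟩
  rw [Fb_eq_rotated] at h
  exact nonneg_of_sq_add_sq_add_sq_eq hcos (sub_eq_zero.mp h)
end
end

section
/- For real t > 0, t ≠ 1, consider in ℂ^{2,1} the null vectors P₁ = (0,0,1), P₂ = (1,0,0), P₃ = (i,0,1), P₄ = (it,0,1) and P*₁ = (0,0,1), P*₂ = (1,0,0), P*₃ = (−i,0,1), P*₄ = (−it,0,1). Then the two quadruples have equal Korányi–Reimann cross-ratios: X(p₁,p₂,p₃,p₄) = X(p*₁,p*₂,p*₃,p*₄) = 1/t, X(p₁,p₃,p₂,p₄) = X(p*₁,p*₃,p*₂,p*₄) = (t−1)/t, X(p₂,p₃,p₁,p₄) = X(p*₂,p*₃,p*₁,p*₄) = 1−t; but their Cartan invariants differ: 𝔸(p₁,p₂,p₃) = −π/2 while 𝔸(p*₁,p*₂,p*₃) = π/2. Consequently there is no ℂ-linear map A: ℂ³ → ℂ³ preserving the Hermitian form together with nonzero scalars λ_i such that A·P_i = λ_i·P*_i for i = 1,2,3,4. -/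
open Complex Matrix
open scoped ComplexConjugate

noncomputable section

lemma herm_smul_smul {n : ℕ} (a b : ℂ) (Z W : Fin (n + 1) → ℂ) :
    herm (a • Z) (b • W) = a * conj b * herm Z W := by
  simp only [herm, Pi.smul_apply, smul_eq_mul, map_mul, mul_add, Finset.mul_sum]
  congr 1
  · ring
  · exact Finset.sum_congr rfl fun _ _ => by ring

/-- A form-preserving map multiplies each triple product `⟨P₁,P₂⟩⟨P₂,P₃⟩⟨P₃,P₁⟩` by the
positive real `|λ₁λ₂λ₃|²`, so its argument does not change. -/
theorem CongruentQuad.cartan_eq {n : ℕ} {P P' : Fin 4 → Fin (n + 1) → ℂ}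
    (h : CongruentQuad P P') (i j k : Fin 4) :
    cartan (P i) (P j) (P k) = cartan (P' i) (P' j) (P' k) := by
  obtain ⟨A, hA, lam, hlam, hAP⟩ := h
  have hherm : ∀ a b, herm (P a) (P b) = lam a * conj (lam b) * herm (P' a) (P' b) :=
    fun a b => by rw [← hA, hAP, hAP, herm_smul_smul]
  have hpos : 0 < normSq (lam i) * normSq (lam j) * normSq (lam k) :=
    mul_pos (mul_pos (normSq_pos.mpr (hlam i)) (normSq_pos.mpr (hlam j))) (normSq_pos.mpr (hlam k))
  have htriple : -(herm (P i) (P j) * herm (P j) (P k) * herm (P k) (P i)) =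
      ((normSq (lam i) * normSq (lam j) * normSq (lam k) : ℝ) : ℂ) *
        -(herm (P' i) (P' j) * herm (P' j) (P' k) * herm (P' k) (P' i)) := by
    rw [hherm, hherm, hherm]
    push_cast
    rw [← mul_conj, ← mul_conj, ← mul_conj]
    ring
  rw [cartan, cartan, htriple, arg_real_mul _ hpos]

theorem stmt19_general (t : ℝ) (ht : 0 < t)
    (P Q : Fin 4 → Fin 3 → ℂ)
    (hP : P = ![![0, 0, 1], ![1, 0, 0], ![Complex.I, 0, 1], ![Complex.I * (t : ℂ), 0, 1]])
    (hQ : Q = ![![0, 0, 1], ![1, 0, 0], ![-Complex.I, 0, 1], ![-(Complex.I * (t : ℂ)), 0, 1]]) :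
    crossRatio (P 0) (P 1) (P 2) (P 3) = 1 / (t : ℂ) ∧
    crossRatio (Q 0) (Q 1) (Q 2) (Q 3) = 1 / (t : ℂ) ∧
    crossRatio (P 0) (P 2) (P 1) (P 3) = ((t : ℂ) - 1) / (t : ℂ) ∧
    crossRatio (Q 0) (Q 2) (Q 1) (Q 3) = ((t : ℂ) - 1) / (t : ℂ) ∧
    crossRatio (P 1) (P 2) (P 0) (P 3) = 1 - (t : ℂ) ∧
    crossRatio (Q 1) (Q 2) (Q 0) (Q 3) = 1 - (t : ℂ) ∧
    cartan (P 0) (P 1) (P 2) = -(Real.pi / 2) ∧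
    cartan (Q 0) (Q 1) (Q 2) = Real.pi / 2 ∧
    ¬ CongruentQuad P Q := by
  have htC : (t : ℂ) ≠ 0 := ofReal_ne_zero.mpr ht.ne'
  have hcartanP : cartan (P 0) (P 1) (P 2) = -(Real.pi / 2) := by
    simp [hP, cartan, herm_fin_three, arg_neg_I]
  have hcartanQ : cartan (Q 0) (Q 1) (Q 2) = Real.pi / 2 := by
    simp [hQ, cartan, herm_fin_three, arg_I]
  have hnot : ¬ CongruentQuad P Q := fun hPQ => by
    have hcartan := hPQ.cartan_eq 0 1 2
    rw [hcartanP, hcartanQ] at hcartan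
    linarith [Real.pi_pos]
  refine ⟨?_, ?_, ?_, ?_, ?_, ?_, hcartanP, hcartanQ, hnot⟩
  all_goals
    simp [hP, hQ, crossRatio, herm_fin_three]
    field_simp
  all_goals first | ring1 | linear_combination ((t : ℂ) - 1) * I_sq

/-- an explicit 1-parameter family of pairs of non-congruent
quadruples with equal cross-ratios. -/
theorem stmt19 (t : ℝ) (ht : 0 < t) (ht1 : t ≠ 1)
    (P Q : Fin 4 → Fin 3 → ℂ)
    (hP : P = ![![0, 0, 1], ![1, 0, 0], ![Complex.I, 0, 1], ![Complex.I * (t : ℂ), 0, 1]])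
    (hQ : Q = ![![0, 0, 1], ![1, 0, 0], ![-Complex.I, 0, 1], ![-(Complex.I * (t : ℂ)), 0, 1]]) :
    crossRatio (P 0) (P 1) (P 2) (P 3) = 1 / (t : ℂ) ∧
    crossRatio (Q 0) (Q 1) (Q 2) (Q 3) = 1 / (t : ℂ) ∧
    crossRatio (P 0) (P 2) (P 1) (P 3) = ((t : ℂ) - 1) / (t : ℂ) ∧
    crossRatio (Q 0) (Q 2) (Q 1) (Q 3) = ((t : ℂ) - 1) / (t : ℂ) ∧
    crossRatio (P 1) (P 2) (P 0) (P 3) = 1 - (t : ℂ) ∧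
    crossRatio (Q 1) (Q 2) (Q 0) (Q 3) = 1 - (t : ℂ) ∧
    cartan (P 0) (P 1) (P 2) = -(Real.pi / 2) ∧
    cartan (Q 0) (Q 1) (Q 2) = Real.pi / 2 ∧
    ¬ CongruentQuad P Q :=
  stmt19_general t ht P Q hP hQ
end
end
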